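/- Let k be a positive integer, let B be a set of size n = 10k − 9, and let A be the set of all k-element subsets of B. Let G be the bipartite graph with vertex set A ∪ B in which a vertex S ∈ A is adjacent exactly to the elements of S (viewed as vertices in B). Then G is not configurable; in particular, G is a graph of minimum degree at least k that is not configurable. -/
import Mathlib


open SimpleGraph

/-- `f` is a configuration on `G`. -/
def IsConfig {V : Type*} (G : SimpleGraph V) (f : V → Finset (Fin 5)) : Prop :=
  (∀ v, (f v).card = 2) ∧
  ∀ (v : V) (c : Fin 5), ∃ u, (u = v ∨ G.Adj u v) ∧ c ∈ f u

/-- A graph is configurable if it admits a configuration. -/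
def Configurable {V : Type*} (G : SimpleGraph V) : Prop :=
  ∃ f : V → Finset (Fin 5), IsConfig G f

/-- The bipartite graph with parts `A` (all `k`-element subsets of `B`) and
`B = Fin (10k − 9)`, where `S ∈ A` is adjacent exactly to its elements. -/
def subsetGraph (k : ℕ) :
    SimpleGraph ({S : Finset (Fin (10 * k - 9)) // S.card = k} ⊕ Fin (10 * k - 9)) :=
  SimpleGraph.fromRel (fun u v =>
    match u, v with
    | Sum.inl S, Sum.inr x => x ∈ S.val
    | _, _ => False)

lemma subsetGraph_adj (k : ℕ) (S : {S : Finset (Fin (10 * k - 9)) // S.card = k})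
    (x : Fin (10 * k - 9)) : (subsetGraph k).Adj (Sum.inl S) (Sum.inr x) ↔ x ∈ S.val := by
  simp [subsetGraph, SimpleGraph.fromRel_adj]

lemma subsetGraph_not_adj_inl (k : ℕ) (S T : {S : Finset (Fin (10 * k - 9)) // S.card = k}) :
    ¬ (subsetGraph k).Adj (Sum.inl S) (Sum.inl T) := by
  simp [subsetGraph, SimpleGraph.fromRel_adj]

lemma subsetGraph_not_adj_inr (k : ℕ) (x y : Fin (10 * k - 9)) :
    ¬ (subsetGraph k).Adj (Sum.inr x) (Sum.inr y) := by
  simp [subsetGraph, SimpleGraph.fromRel_adj]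

lemma card_le_ncard_neighborSet {V : Type*} [Finite V] {G : SimpleGraph V} {v : V} {t : Finset V}
    (h : ↑t ⊆ G.neighborSet v) : t.card ≤ (G.neighborSet v).ncard := by
  classical
  rw [← Set.ncard_coe_finset]
  exact Set.ncard_le_ncard h (Set.toFinite _)

theorem stmt18 (k : ℕ) (hk : 0 < k) :
    ¬ Configurable (subsetGraph k) ∧
    ∀ v, k ≤ ((subsetGraph k).neighborSet v).ncard := by
  constructor
  · rintro ⟨f, hf2, hfc⟩
    -- pigeonhole: some 2-set `T` of colors is the value of `f ∘ Sum.inr` at least `k` times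
    obtain ⟨T, hTmem, hTcard⟩ :=
      Finset.exists_lt_card_fiber_of_mul_lt_card_of_maps_to
        (s := (Finset.univ : Finset (Fin (10 * k - 9))))
        (t := (Finset.univ : Finset (Fin 5)).powersetCard 2)
        (f := fun x => f (Sum.inr x)) (n := k - 1)
        (fun a _ => by simp [Finset.mem_powersetCard, hf2 (Sum.inr a)])
        (by
          rw [Finset.card_powersetCard, Finset.card_univ, Finset.card_univ]
          simp only [Fintype.card_fin]
          have h5 : Nat.choose 5 2 = 10 := by decide
          rw [h5]; omega)
    obtain ⟨S, hSsub, hScard⟩ := Finset.exists_subset_card_eq (s := Finset.univ.filter fun x => f (Sum.inr x) = T) (n := k) (by omega)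
    have hTc : T.card = 2 := (Finset.mem_powersetCard.mp hTmem).2
    set v : ({S : Finset (Fin (10 * k - 9)) // S.card = k} ⊕ Fin (10 * k - 9)) :=
      Sum.inl ⟨S, hScard⟩ with hv
    -- pick a color outside `f v ∪ T`
    have hne : (f v ∪ T)ᶜ.Nonempty := by
      rw [← Finset.card_pos, Finset.card_compl]
      have h1 : (f v ∪ T).card ≤ (f v).card + T.card := Finset.card_union_le _ _
      rw [hf2 v, hTc] at h1
      have h2 : Fintype.card (Fin 5) = 5 := by simp
      omega
    obtain ⟨c, hc⟩ := hne
    rw [Finset.mem_compl, Finset.mem_union] at hc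
    push_neg at hc
    obtain ⟨u, hu, hcu⟩ := hfc v c
    rcases hu with rfl | hadj
    · exact hc.1 hcu
    · rcases u with U | x
      · exact subsetGraph_not_adj_inl k U ⟨S, hScard⟩ hadj
      · have hx : x ∈ S := by
          have := ((subsetGraph k).adj_symm hadj)
          rwa [hv, subsetGraph_adj] at this
        have hfx : f (Sum.inr x) = T := (Finset.mem_filter.mp (hSsub hx)).2
        rw [hfx] at hcu
        exact hc.2 hcu
  · rintro (⟨S, hS⟩ | x)
    · -- a set vertex: its elements are `k` distinct neighbors
      have := card_le_ncard_neighborSet (G := subsetGraph k) (v := Sum.inl ⟨S, hS⟩)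
        (t := S.image Sum.inr) ?_
      · rwa [Finset.card_image_of_injective _ Sum.inr_injective, hS] at this
      · intro u hu
        simp only [Finset.coe_image, Set.mem_image, Finset.mem_coe] at hu
        obtain ⟨y, hy, rfl⟩ := hu
        rw [SimpleGraph.mem_neighborSet, subsetGraph_adj]
        exact hy
    · -- an element vertex
      rcases Nat.lt_or_ge k 2 with hk2 | hk2
      · -- k = 1
        have hk1 : k = 1 := by omega
        subst hk1
        have hmem : Sum.inl (⟨{x}, Finset.card_singleton x⟩ : {S : Finset (Fin (10 * 1 - 9)) // S.card = 1}) ∈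
            (subsetGraph 1).neighborSet (Sum.inr x) := by
          rw [SimpleGraph.mem_neighborSet]
          exact ((subsetGraph 1).adj_symm ((subsetGraph_adj 1 _ x).mpr (by simp)))
        have := card_le_ncard_neighborSet (G := subsetGraph 1) (v := Sum.inr x)
          (t := {Sum.inl ⟨{x}, Finset.card_singleton x⟩})
          (by rw [Finset.coe_singleton, Set.singleton_subset_iff]; exact hmem)
        simpa using this
      · -- k ≥ 2 : build k distinct k-subsets containing x
        obtain ⟨K, hKsub, hKcard⟩ := Finset.exists_subset_card_eq (s := Finset.univ.erase x) (n := k)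
          (by
            rw [Finset.card_erase_of_mem (Finset.mem_univ x), Finset.card_univ]
            simp only [Fintype.card_fin]
            omega)
        have hxK : x ∉ K := fun h => (Finset.mem_erase.mp (hKsub h)).1 rfl
        have hcard : ∀ y ∈ K, (insert x (K.erase y)).card = k := by
          intro y hy
          rw [Finset.card_insert_of_notMem (fun h => hxK (Finset.mem_of_mem_erase h)),
            Finset.card_erase_of_mem hy, hKcard]
          omega
        set F : {y // y ∈ K} → ({S : Finset (Fin (10 * k - 9)) // S.card = k} ⊕ Fin (10 * k - 9)) :=
          fun y => Sum.inl ⟨insert x (K.erase y.1), hcard y.1 y.2⟩ with hF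
        have hinj : Function.Injective F := by
          rintro ⟨y1, hy1⟩ ⟨y2, hy2⟩ h
          simp only [hF, Sum.inl.injEq, Subtype.mk.injEq] at h
          by_contra hne
          have hne' : y1 ≠ y2 := fun hh => hne (by simpa using hh)
          have : y1 ∈ insert x (K.erase y2) := Finset.mem_insert_of_mem
            (Finset.mem_erase.mpr ⟨hne', hy1⟩)
          rw [← h] at this
          rcases Finset.mem_insert.mp this with h1 | h1
          · exact hxK (h1 ▸ hy1)
          · exact (Finset.mem_erase.mp h1).1 rfl
        have := card_le_ncard_neighborSet (G := subsetGraph k) (v := Sum.inr x)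
          (t := K.attach.image F) ?_
        · rwa [Finset.card_image_of_injective _ hinj, Finset.card_attach, hKcard] at this
        · intro u hu
          simp only [Finset.coe_image, Set.mem_image, Finset.mem_coe, Finset.mem_attach] at hu
          obtain ⟨y, -, rfl⟩ := hu
          rw [SimpleGraph.mem_neighborSet]
          exact (subsetGraph k).adj_symm ((subsetGraph_adj k _ x).mpr (Finset.mem_insert_self _ _))
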